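/- Let α > 0, φ ∈ ω_{α,loc}, X a complex Banach space and T a bounded linear operator on X such that ‖Δ^{-α}𝒯(n)‖ ≤ C·φ(n) for all n ∈ ℕ₀ and some C > 0. For a finitely supported sequence f : ℕ₀ → ℂ define θ(f) := ∑_{n=0}^∞ W^α f(n)·Δ^{-α}𝒯(n) (a finite sum of bounded operators). Then: (1) ‖θ(f)x‖ ≤ C·q_φ(f)·‖x‖ for all f finitely supported and x ∈ X; (2) θ(f*g) = θ(f)∘θ(g) for all finitely supported f, g; (3) θ(h_n^α) = Δ^{-α}𝒯(n) for all n ∈ ℕ₀; in particular θ(e_0) = I and θ(e_1) = T. -/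

import Mathlib

/-- The Cesàro kernel `k^α(n) = Γ(n+α)/(Γ(α)·Γ(n+1))`. -/
noncomputable def cesK (α : ℝ) (n : ℕ) : ℝ :=
  Real.Gamma ((n : ℝ) + α) / (Real.Gamma α * Real.Gamma ((n : ℝ) + 1))

/-- `φ` belongs to the class `ω_{α,loc}` with constant `c`. -/
def omegaLoc (α : ℝ) (φ : ℕ → ℝ) (c : ℝ) : Prop :=
  ∀ j p : ℕ, 1 ≤ j → j ≤ p →
    ((∑ n ∈ Finset.range (j + 1), cesK α n * φ (j + p - n)) +
        ∑ n ∈ Finset.Icc (p + 1) (j + p), cesK α n * φ (j + p - n)) ≤ c * (φ j * φ p)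

/-- The Weyl sum of order `α`: `W^{-α}f(n) = ∑_{j=n}^∞ k^α(j-n)·f(j)`. -/
noncomputable def weylSum (α : ℝ) (f : ℕ → ℂ) : ℕ → ℂ :=
  fun n => ∑ᶠ j : ℕ, (cesK α j : ℂ) * f (j + n)

/-- The forward difference operator `Δh(n) = h(n+1) - h(n)`. -/
def fdiff (f : ℕ → ℂ) : ℕ → ℂ := fun n => f (n + 1) - f n

/-- The Weyl difference of order `α > 0`:
`W^α f(n) = (-1)^m Δ^m W^{-(m-α)} f(n)` with `m = [α]+1`; and `W^0 f = f`. -/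
noncomputable def weylDiff (α : ℝ) (f : ℕ → ℂ) : ℕ → ℂ :=
  if α = 0 then f
  else fun n => (-1 : ℂ) ^ (⌊α⌋₊ + 1) * fdiff^[⌊α⌋₊ + 1] (weylSum ((⌊α⌋₊ : ℝ) + 1 - α) f) n

/-- Convolution of sequences: `(f*g)(n) = ∑_{j=0}^n f(n-j)·g(j)`. -/
noncomputable def conv (f g : ℕ → ℂ) (n : ℕ) : ℂ :=
  ∑ j ∈ Finset.range (n + 1), f (n - j) * g j

/-- `q_φ(f) = ∑_{n=0}^∞ φ(n)·|W^α f(n)|`. -/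
noncomputable def qNorm (α : ℝ) (φ : ℕ → ℝ) (f : ℕ → ℂ) : ℝ :=
  ∑ᶠ n : ℕ, φ n * ‖weylDiff α f n‖

/-- The Cesàro sum of order `α` of a bounded operator `T`:
`Δ^{-α}𝒯(n) = ∑_{j=0}^n k^α(n-j)·T^j`. -/
noncomputable def cesOp {X : Type*} [NormedAddCommGroup X] [NormedSpace ℂ X]
    (α : ℝ) (T : X →L[ℂ] X) (n : ℕ) : X →L[ℂ] X :=
  ∑ j ∈ Finset.range (n + 1), (cesK α (n - j) : ℂ) • T ^ j

/-- The algebra homomorphism `θ(f) = ∑_{n=0}^∞ W^α f(n)·Δ^{-α}𝒯(n)`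
(a finite sum for finitely supported `f`). -/
noncomputable def theta {X : Type*} [NormedAddCommGroup X] [NormedSpace ℂ X]
    (α : ℝ) (T : X →L[ℂ] X) (f : ℕ → ℂ) : X →L[ℂ] X :=
  ∑ᶠ n : ℕ, weylDiff α f n • cesOp α T n

/-- The sequence `h_n^α(j) = k^α(n-j)` for `j ≤ n`, `0` for `j > n`. -/
noncomputable def hseq (α : ℝ) (n : ℕ) : ℕ → ℂ :=
  fun j => if j ≤ n then (cesK α (n - j) : ℂ) else 0

/-- The canonical sequence `e_n(j) = δ_{n,j}`. -/
def eseq (n : ℕ) : ℕ → ℂ := fun j => if j = n then 1 else 0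

/-!
The Weyl sum `W^{-α}` inverts `W^α` on finitely supported sequences: writing
`k^α(n) = (-1)^n (-α choose n)`, Chu–Vandermonde gives `k^α * k^β = k^{α+β}`, hence
`W^{-α} W^{-β} = W^{-(α+β)}`, and `W^{-1}` inverts the backward difference. Exchanging the order
of summation in `θ(f) = ∑ₙ W^α f(n) ∑_{j ≤ n} k^α(n-j) T^j` therefore gives
`θ(f) = ∑ⱼ f(j) T^j = p_f(T)`, where `p_f` is the polynomial with coefficient sequence `f`.
Convolution is multiplication of polynomials, so `θ` is multiplicative, and the bound is the
triangle inequality applied to the defining sum.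
-/

open Finset

lemma cesK_zero {α : ℝ} (hα : 0 < α) : cesK α 0 = 1 := by
  simp [cesK, (Real.Gamma_pos_of_pos hα).ne']

lemma cesK_one (n : ℕ) : cesK 1 n = 1 := by
  simp [cesK, (Real.Gamma_pos_of_pos (Nat.cast_add_one_pos n)).ne']

lemma succ_mul_cesK_succ {α : ℝ} (hα : 0 < α) (n : ℕ) :
    ((n : ℝ) + 1) * cesK α (n + 1) = ((n : ℝ) + α) * cesK α n := by
  simp only [cesK, Nat.cast_succ, add_right_comm _ (1:ℝ) α,
    Real.Gamma_add_one (by positivity : (n : ℝ) + α ≠ 0),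
    Real.Gamma_add_one (by positivity : (n : ℝ) + 1 ≠ 0)]
  field_simp

lemma succ_mul_choose_neg_succ (r : ℝ) (n : ℕ) :
    ((n : ℝ) + 1) * Ring.choose (-r) (n + 1) = -((n : ℝ) + r) * Ring.choose (-r) n := by
  have := Ring.choose_smul_choose (-r) (Nat.le_add_right n 1)
  rw [Nat.add_sub_cancel_left, Ring.choose_one_right, Nat.choose_succ_self_right,
    nsmul_eq_mul] at this
  push_cast at this
  rw [this]; ring

lemma cesK_eq_neg_one_pow_mul_choose {α : ℝ} (hα : 0 < α) (n : ℕ) :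
    cesK α n = (-1) ^ n * Ring.choose (-α) n := by
  induction n with
  | zero => simp [cesK_zero hα]
  | succ n ih =>
    refine mul_left_cancel₀ (Nat.cast_add_one_pos n).ne' ?_
    calc ((n : ℝ) + 1) * cesK α (n + 1) = (n + α) * ((-1) ^ n * Ring.choose (-α) n) := by
          rw [succ_mul_cesK_succ hα, ih]
      _ = (-1) ^ (n + 1) * (-(n + α) * Ring.choose (-α) n) := by ring
      _ = _ := by rw [← succ_mul_choose_neg_succ]; ring

lemma cesK_add {α β : ℝ} (hα : 0 < α) (hβ : 0 < β) (n : ℕ) :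
    cesK (α + β) n = ∑ i ∈ range (n + 1), cesK α i * cesK β (n - i) := by
  rw [← Nat.sum_antidiagonal_eq_sum_range_succ (fun i j => cesK α i * cesK β j),
    cesK_eq_neg_one_pow_mul_choose (add_pos hα hβ), neg_add,
    Ring.add_choose_eq n (Commute.all _ _), mul_sum]
  refine sum_congr rfl fun ij hij => ?_
  rw [cesK_eq_neg_one_pow_mul_choose hα, cesK_eq_neg_one_pow_mul_choose hβ,
    ← HasAntidiagonal.mem_antidiagonal.1 hij, pow_add]
  ring

def VanishesFrom {M : Type*} [Zero M] (N : ℕ) (f : ℕ → M) : Prop := ∀ n, N ≤ n → f n = 0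

lemma exists_vanishesFrom {M : Type*} [Zero M] {f : ℕ → M} (hf : (Function.support f).Finite) :
    ∃ N, VanishesFrom N f := by
  obtain ⟨B, hB⟩ := hf.bddAbove
  exact ⟨B + 1, fun n hn => by_contra fun h => by have := hB h; omega⟩

namespace VanishesFrom

variable {M : Type*} {N : ℕ}

lemma finsum_eq_sum_range [AddCommMonoid M] {f : ℕ → M} (hf : VanishesFrom N f) :
    ∑ᶠ n, f n = ∑ n ∈ range N, f n :=
  finsum_eq_sum_of_support_subset f fun n hn => by
    by_contra h
    simp only [coe_range, Set.mem_Iio, not_lt] at h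
    exact hn (hf n h)

lemma sum_range_eq_of_le [AddCommMonoid M] {f : ℕ → M} (hf : VanishesFrom N f) {K : ℕ}
    (hK : N ≤ K) :
    ∑ n ∈ range K, f n = ∑ n ∈ range N, f n :=
  (sum_subset (range_subset_range.2 hK) fun n _ hn => hf n (by simpa using hn)).symm

end VanishesFrom

/-- `∇ = -Δ`, which absorbs the sign `(-1)^m` in `weylDiff`. -/
def bdiff (f : ℕ → ℂ) : ℕ → ℂ := fun n => f n - f (n + 1)

lemma bdiff_iterate_apply (m : ℕ) (f : ℕ → ℂ) (n : ℕ) :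
    bdiff^[m] f n = (-1) ^ m * fdiff^[m] f n := by
  induction m generalizing n with
  | zero => simp
  | succ m ih =>
    simp only [Function.iterate_succ_apply', bdiff, fdiff, ih]
    ring

section Weyl

variable {N : ℕ} {f : ℕ → ℂ}

lemma VanishesFrom.bdiff (hf : VanishesFrom N f) : VanishesFrom N (bdiff f) := fun n hn => by
  simp [_root_.bdiff, hf n hn, hf (n + 1) (by omega)]

lemma VanishesFrom.bdiff_iterate (hf : VanishesFrom N f) (m : ℕ) :
    VanishesFrom N (_root_.bdiff^[m] f) := by
  induction m with
  | zero => exact hf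
  | succ m ih => rw [Function.iterate_succ_apply' _root_.bdiff]; exact ih.bdiff

lemma weylSum_eq_sum_range (hf : VanishesFrom N f) (γ : ℝ) (n : ℕ) :
    weylSum γ f n = ∑ j ∈ range N, (cesK γ j : ℂ) * f (j + n) :=
  VanishesFrom.finsum_eq_sum_range fun j hj => by rw [hf (j + n) (by omega), mul_zero]

lemma VanishesFrom.weylSum (hf : VanishesFrom N f) (γ : ℝ) : VanishesFrom N (weylSum γ f) :=
  fun n hn => by
    rw [weylSum_eq_sum_range hf]
    exact sum_eq_zero fun j _ => by rw [hf (j + n) (by omega), mul_zero]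

lemma weylSum_bdiff (hf : VanishesFrom N f) (γ : ℝ) :
    weylSum γ (bdiff f) = bdiff (weylSum γ f) := by
  funext n
  simp only [weylSum_eq_sum_range hf.bdiff, bdiff, weylSum_eq_sum_range hf, ← sum_sub_distrib,
    mul_sub, add_assoc]

lemma weylSum_bdiff_iterate (hf : VanishesFrom N f) (γ : ℝ) (m : ℕ) :
    weylSum γ (bdiff^[m] f) = bdiff^[m] (weylSum γ f) := by
  induction m with
  | zero => rfl
  | succ m ih =>
    rw [Function.iterate_succ_apply', Function.iterate_succ_apply',
      weylSum_bdiff (hf.bdiff_iterate m), ih]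

lemma weylSum_one_bdiff (hf : VanishesFrom N f) : weylSum 1 (bdiff f) = f := by
  funext n
  rw [weylSum_eq_sum_range hf.bdiff]
  simp only [cesK_one, Complex.ofReal_one, one_mul, bdiff]
  have := sum_range_sub' (fun j => f (j + n)) N
  simp only [add_right_comm _ 1 n, zero_add, hf (N + n) (by omega), sub_zero] at this
  exact this

lemma weylSum_weylSum {α β : ℝ} (hα : 0 < α) (hβ : 0 < β) (hf : VanishesFrom N f) :
    weylSum α (weylSum β f) = weylSum (α + β) f := by
  funext n
  have inner : ∀ j ∈ range N, (cesK α j : ℂ) * weylSum β f (j + n) =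
      ∑ i ∈ range (N - j), (cesK α j : ℂ) * ((cesK β i : ℂ) * f (i + (j + n))) := by
    intro j hj
    rw [weylSum_eq_sum_range hf, mul_sum, VanishesFrom.sum_range_eq_of_le _ (Nat.sub_le N j)]
    intro i hi
    dsimp only
    rw [hf _ (by have := mem_range.1 hj; omega), mul_zero, mul_zero]
  rw [weylSum_eq_sum_range (hf.weylSum β), sum_congr rfl inner, ← sum_range_diag_flip,
    weylSum_eq_sum_range hf]
  refine sum_congr rfl fun m _ => ?_
  rw [cesK_add hα hβ, Complex.ofReal_sum, sum_mul]
  refine sum_congr rfl fun i hi => ?_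
  rw [show m - i + (i + n) = m + n by have := mem_range.1 hi; omega]
  push_cast
  ring

lemma weylSum_natCast_add_one_bdiff_iterate (hf : VanishesFrom N f) (m : ℕ) :
    weylSum ((m : ℝ) + 1) (bdiff^[m + 1] f) = f := by
  induction m generalizing f with
  | zero => simpa using weylSum_one_bdiff hf
  | succ m ih =>
    rw [Nat.cast_succ, ← weylSum_weylSum (Nat.cast_add_one_pos m) one_pos
      (hf.bdiff_iterate _), Function.iterate_succ_apply' bdiff (m + 1),
      weylSum_one_bdiff (hf.bdiff_iterate _), ih hf]

lemma weylDiff_eq_bdiff_iterate {α : ℝ} (hα : α ≠ 0) (f : ℕ → ℂ) :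
    weylDiff α f = bdiff^[⌊α⌋₊ + 1] (weylSum ((⌊α⌋₊ : ℝ) + 1 - α) f) := by
  funext n
  rw [weylDiff, if_neg hα, bdiff_iterate_apply]

lemma VanishesFrom.weylDiff {α : ℝ} (hα : α ≠ 0) (hf : VanishesFrom N f) :
    VanishesFrom N (weylDiff α f) := by
  rw [weylDiff_eq_bdiff_iterate hα]
  exact (hf.weylSum _).bdiff_iterate _

lemma weylSum_weylDiff {α : ℝ} (hα : 0 < α) (hf : VanishesFrom N f) :
    weylSum α (weylDiff α f) = f := by
  have hβ : 0 < (⌊α⌋₊ : ℝ) + 1 - α := by linarith [Nat.lt_floor_add_one α]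
  rw [weylDiff_eq_bdiff_iterate hα.ne', weylSum_bdiff_iterate (hf.weylSum _),
    weylSum_weylSum hα hβ hf, add_sub_cancel, ← weylSum_bdiff_iterate hf,
    weylSum_natCast_add_one_bdiff_iterate hf]

end Weyl

section Operator

variable {X : Type*} [NormedAddCommGroup X] [NormedSpace ℂ X] {α : ℝ} (T : X →L[ℂ] X)
  {N : ℕ} {f : ℕ → ℂ}

lemma sum_smul_cesOp_eq_sum_weylSum_smul_pow {g : ℕ → ℂ} (hg : VanishesFrom N g) :
    ∑ n ∈ range N, g n • cesOp α T n = ∑ j ∈ range N, weylSum α g j • T ^ j := by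
  have expand : ∀ n ∈ range N, g n • cesOp α T n =
      ∑ j ∈ range (n + 1), ((cesK α (n - j) : ℂ) * g (j + (n - j))) • T ^ j := by
    intro n _
    rw [cesOp, smul_sum]
    refine sum_congr rfl fun j hj => ?_
    rw [Nat.add_sub_cancel' (Nat.lt_succ_iff.1 (mem_range.1 hj)), smul_smul, mul_comm]
  rw [sum_congr rfl expand,
    sum_range_diag_flip N fun j i => ((cesK α i : ℂ) * g (j + i)) • T ^ j]
  refine sum_congr rfl fun j hj => ?_
  rw [← sum_smul, weylSum_eq_sum_range hg]
  congr 1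
  refine (VanishesFrom.sum_range_eq_of_le (fun i hi => ?_) (Nat.sub_le N j)).symm.trans
    (sum_congr rfl fun i _ => by rw [add_comm])
  rw [hg _ (by have := mem_range.1 hj; omega), mul_zero]

lemma theta_eq_sum_range_weylDiff (hα : α ≠ 0) (hf : VanishesFrom N f) :
    theta α T f = ∑ n ∈ range N, weylDiff α f n • cesOp α T n :=
  VanishesFrom.finsum_eq_sum_range fun n hn => by rw [hf.weylDiff hα n hn, zero_smul]

lemma theta_eq_sum_range (hα : 0 < α) (hf : VanishesFrom N f) :
    theta α T f = ∑ n ∈ range N, f n • T ^ n := by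
  rw [theta_eq_sum_range_weylDiff T hα.ne' hf,
    sum_smul_cesOp_eq_sum_weylSum_smul_pow T (hf.weylDiff hα.ne'), weylSum_weylDiff hα hf]

lemma theta_coeff (hα : 0 < α) (p : Polynomial ℂ) :
    theta α T p.coeff = Polynomial.aeval T p := by
  rw [Polynomial.aeval_eq_sum_range, theta_eq_sum_range T hα (N := p.natDegree + 1)
    fun n hn => Polynomial.coeff_eq_zero_of_natDegree_lt (by omega)]

lemma norm_theta_apply_le (hα : α ≠ 0) {φ : ℕ → ℝ} {C : ℝ}
    (hT : ∀ n, ‖cesOp α T n‖ ≤ C * φ n) (hf : (Function.support f).Finite) (x : X) :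
    ‖theta α T f x‖ ≤ C * qNorm α φ f * ‖x‖ := by
  obtain ⟨N, hN⟩ := exists_vanishesFrom hf
  have hq : qNorm α φ f = ∑ n ∈ range N, φ n * ‖weylDiff α f n‖ :=
    VanishesFrom.finsum_eq_sum_range fun n hn => by simp [hN.weylDiff hα n hn]
  rw [theta_eq_sum_range_weylDiff T hα hN, hq, _root_.sum_apply, mul_sum, sum_mul]
  refine (norm_sum_le _ _).trans (sum_le_sum fun n _ => ?_)
  calc ‖(weylDiff α f n • cesOp α T n) x‖
      = ‖weylDiff α f n‖ * ‖cesOp α T n x‖ := by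
        rw [smul_apply, norm_smul]
    _ ≤ ‖weylDiff α f n‖ * (C * φ n * ‖x‖) := by
        gcongr
        exact (cesOp α T n).le_of_opNorm_le (hT n) x
    _ = C * (φ n * ‖weylDiff α f n‖) * ‖x‖ := by ring

lemma exists_polynomial_coeff_eq (hf : (Function.support f).Finite) :
    ∃ p : Polynomial ℂ, p.coeff = f :=
  ⟨⟨.ofCoeff (.ofSupportFinite f hf)⟩, rfl⟩

lemma conv_coeff_eq_coeff_mul (p q : Polynomial ℂ) :
    (fun n => conv p.coeff q.coeff n) = (p * q).coeff := by
  funext n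
  rw [Polynomial.coeff_mul, ← Nat.sum_antidiagonal_swap]
  simp only [Prod.fst_swap, Prod.snd_swap]
  rw [Nat.sum_antidiagonal_eq_sum_range_succ (fun i j => p.coeff j * q.coeff i), conv]

lemma theta_conv (hα : 0 < α) {g : ℕ → ℂ} (hf : (Function.support f).Finite)
    (hg : (Function.support g).Finite) :
    theta α T (fun n => conv f g n) = theta α T f * theta α T g := by
  obtain ⟨p, rfl⟩ := exists_polynomial_coeff_eq hf
  obtain ⟨q, rfl⟩ := exists_polynomial_coeff_eq hg
  rw [conv_coeff_eq_coeff_mul, theta_coeff T hα, theta_coeff T hα, theta_coeff T hα, map_mul]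

lemma theta_hseq (hα : 0 < α) (n : ℕ) : theta α T (hseq α n) = cesOp α T n := by
  rw [theta_eq_sum_range T hα (N := n + 1)
    fun j hj => by simp only [hseq, if_neg (show ¬j ≤ n by omega)], cesOp]
  exact sum_congr rfl fun j hj => by rw [hseq, if_pos (Nat.lt_succ_iff.1 (mem_range.1 hj))]

lemma theta_eseq_zero (hα : 0 < α) : theta α T (eseq 0) = 1 := by
  have : eseq 0 = (1 : Polynomial ℂ).coeff := by
    funext n; rw [Polynomial.coeff_one]; rfl
  rw [this, theta_coeff T hα, map_one]

lemma theta_eseq_one (hα : 0 < α) : theta α T (eseq 1) = T := by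
  have : eseq 1 = (Polynomial.X : Polynomial ℂ).coeff := by
    funext n; simp only [eseq, Polynomial.coeff_X, @eq_comm _ 1 n]
  rw [this, theta_coeff T hα, Polynomial.aeval_X]

end Operator

theorem stmt15_general {X : Type*} [NormedAddCommGroup X] [NormedSpace ℂ X]
    (α : ℝ) (hα : 0 < α) (φ : ℕ → ℝ) (T : X →L[ℂ] X) (C : ℝ)
    (hT : ∀ n : ℕ, ‖cesOp α T n‖ ≤ C * φ n) :
    (∀ f : ℕ → ℂ, (Function.support f).Finite → ∀ x : X,
        ‖theta α T f x‖ ≤ C * qNorm α φ f * ‖x‖) ∧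
    (∀ f g : ℕ → ℂ, (Function.support f).Finite → (Function.support g).Finite →
        theta α T (fun n => conv f g n) = theta α T f * theta α T g) ∧
    (∀ n : ℕ, theta α T (hseq α n) = cesOp α T n) ∧
    theta α T (eseq 0) = 1 ∧ theta α T (eseq 1) = T :=
  ⟨fun _ hf => norm_theta_apply_le T hα.ne' hT hf, fun _ _ => theta_conv T hα,
    theta_hseq T hα, theta_eseq_zero T hα, theta_eseq_one T hα⟩

theorem stmt15 {X : Type*} [NormedAddCommGroup X] [NormedSpace ℂ X] [CompleteSpace X]
    (α : ℝ) (hα : 0 < α) (φ : ℕ → ℝ) (hφpos : ∀ n, 0 < φ n) (c : ℝ) (hc : 0 < c)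
    (hφ : omegaLoc α φ c) (T : X →L[ℂ] X) (C : ℝ) (hC : 0 < C)
    (hT : ∀ n : ℕ, ‖cesOp α T n‖ ≤ C * φ n) :
    (∀ f : ℕ → ℂ, (Function.support f).Finite → ∀ x : X,
        ‖theta α T f x‖ ≤ C * qNorm α φ f * ‖x‖) ∧
    (∀ f g : ℕ → ℂ, (Function.support f).Finite → (Function.support g).Finite →
        theta α T (fun n => conv f g n) = theta α T f * theta α T g) ∧
    (∀ n : ℕ, theta α T (hseq α n) = cesOp α T n) ∧
    theta α T (eseq 0) = 1 ∧ theta α T (eseq 1) = T :=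
  stmt15_general α hα φ T C hT
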